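/- arXiv:1307.7672 — 6 statements merged into one kernel-verified Lean document; each statement's English description precedes it below -/
import Mathlib

section
/- Let A be a finite-dimensional (left) Leibniz algebra over a field and let M be a nonzero finite-dimensional irreducible A-module with associated representation (T, S). Then [a,a] ∈ Ker(T) ∩ Ker(S) for every a ∈ A (so that the quotient A/Ker(T,S) is a Lie algebra), and moreover either S_a = 0 for all a ∈ A, or S_a = -T_a for all a ∈ A. -/
/-- Span of all brackets `[u, v]` with `u ∈ p`, `v ∈ q`. -/
def bracketSpan {K A : Type*} [Field K] [AddCommGroup A] [Module K A]
    (br : A →ₗ[K] A →ₗ[K] A) (p q : Submodule K A) : Submodule K A :=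
  Submodule.span K {x | ∃ a ∈ p, ∃ b ∈ q, br a b = x}

/-- Derived series: `derSeries br 0 = A` and
`derSeries br (n+1) = [derSeries br n, derSeries br n]`; so `derSeries br n = A^(n+1)`.
The algebra is solvable iff some term vanishes. -/
def derSeries {K A : Type*} [Field K] [AddCommGroup A] [Module K A]
    (br : A →ₗ[K] A →ₗ[K] A) : ℕ → Submodule K A
  | 0 => ⊤
  | n + 1 => bracketSpan br (derSeries br n) (derSeries br n)

/-- Lower central series: `lcs br 0 = A` and `lcs br (n+1) = [A, lcs br n]`;
so `lcs br n = A^(n+1)`.  The algebra is nilpotent iff some term vanishes. -/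
def lcs {K A : Type*} [Field K] [AddCommGroup A] [Module K A]
    (br : A →ₗ[K] A →ₗ[K] A) : ℕ → Submodule K A
  | 0 => ⊤
  | n + 1 => bracketSpan br ⊤ (lcs br n)

/-!
Substituting the third module axiom into the second (with the same `a, b`) gives
`S_b (T_a m + S_a m) = 0`. The common kernel `M₀` of all the `S_b` is a submodule by the second
axiom, and it contains every `T_a m + S_a m`. By irreducibility either `M₀ = M`, i.e. `S = 0`,
or `M₀ = 0`, i.e. `S = -T`. The first axiom with `a = b` gives `T_[a,a] = 0`, and the third gives
`S_[a,a] = (S_a + T_a) ∘ S_a`, which vanishes in both cases.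
-/

section LeibnizModule

variable {K A M : Type*} [CommRing K] [AddCommGroup A] [Module K A] [AddCommGroup M] [Module K M]
  {br : A →ₗ[K] A →ₗ[K] A} {T S : A →ₗ[K] Module.End K M}

theorem T_bracket_self_eq_zero
    (hTT : ∀ (a b : A) (m : M), T a (T b m) = T (br a b) m + T b (T a m)) (a : A) :
    T (br a a) = 0 := by
  ext m
  simpa using (hTT a a m).symm

theorem S_T_add_S_eq_zero
    (hTS : ∀ (a b : A) (m : M), T a (S b m) = S b (T a m) + S (br a b) m)
    (hST : ∀ (a b : A) (m : M), S (br a b) m = S b (S a m) + T a (S b m))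
    (a b : A) (m : M) : S b (T a m + S a m) = 0 := by
  have h := hTS a b m
  rw [hST a b m, ← add_assoc, right_eq_add] at h
  rwa [map_add]

variable (S) in
def rightAnnihilator : Submodule K M :=
  ⨅ b : A, LinearMap.ker (S b)

theorem mem_rightAnnihilator {m : M} : m ∈ rightAnnihilator S ↔ ∀ b, S b m = 0 := by
  simp [rightAnnihilator, Submodule.mem_iInf]

theorem rightAnnihilator_invariant
    (hTS : ∀ (a b : A) (m : M), T a (S b m) = S b (T a m) + S (br a b) m)
    (a : A) (m : M) (hm : m ∈ rightAnnihilator S) :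
    T a m ∈ rightAnnihilator S ∧ S a m ∈ rightAnnihilator S := by
  rw [mem_rightAnnihilator] at hm
  refine ⟨mem_rightAnnihilator.2 fun b => ?_, mem_rightAnnihilator.2 fun b => ?_⟩
  · simpa [hm] using (hTS a b m).symm
  · simp [hm a]

theorem S_eq_zero_or_S_eq_neg_T
    (hTS : ∀ (a b : A) (m : M), T a (S b m) = S b (T a m) + S (br a b) m)
    (hST : ∀ (a b : A) (m : M), S (br a b) m = S b (S a m) + T a (S b m))
    (hirr : ∀ N : Submodule K M,
      (∀ (a : A), ∀ m ∈ N, T a m ∈ N ∧ S a m ∈ N) → N = ⊥ ∨ N = ⊤) :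
    (∀ a : A, S a = 0) ∨ (∀ a : A, S a = -T a) := by
  rcases hirr _ (rightAnnihilator_invariant hTS) with h | h
  · refine Or.inr fun a => LinearMap.ext fun m => ?_
    have hmem : T a m + S a m ∈ rightAnnihilator S :=
      mem_rightAnnihilator.2 fun b => S_T_add_S_eq_zero hTS hST a b m
    rw [h, Submodule.mem_bot, add_comm, add_eq_zero_iff_eq_neg] at hmem
    simpa using hmem
  · refine Or.inl fun a => LinearMap.ext fun m => ?_
    exact mem_rightAnnihilator.1 (h ▸ Submodule.mem_top) a

end LeibnizModule

theorem leibniz_irreducible_module_squares_in_kernel_general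
    {K A M : Type*} [Field K]
    [AddCommGroup A] [Module K A]
    [AddCommGroup M] [Module K M]
    (br : A →ₗ[K] A →ₗ[K] A)
    (T S : A →ₗ[K] Module.End K M)
    (hTT : ∀ (a b : A) (m : M), T a (T b m) = T (br a b) m + T b (T a m))
    (hTS : ∀ (a b : A) (m : M), T a (S b m) = S b (T a m) + S (br a b) m)
    (hST : ∀ (a b : A) (m : M), S (br a b) m = S b (S a m) + T a (S b m))
    (hirr : ∀ N : Submodule K M,
      (∀ (a : A), ∀ m ∈ N, T a m ∈ N ∧ S a m ∈ N) → N = ⊥ ∨ N = ⊤)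
 :
    (∀ a : A, T (br a a) = 0 ∧ S (br a a) = 0) ∧
      ((∀ a : A, S a = 0) ∨ (∀ a : A, S a = -T a)) := by
  have hdich := S_eq_zero_or_S_eq_neg_T hTS hST hirr
  refine ⟨fun a => ⟨T_bracket_self_eq_zero hTT a, LinearMap.ext fun m => ?_⟩, hdich⟩
  rw [hST a a m]
  rcases hdich with hS | hS <;> simp [hS]

/-- for a nonzero irreducible module `M` over a finite-dimensional
(left) Leibniz algebra `A` with associated representation `(T, S)`, every square
`[a, a]` lies in `Ker T ∩ Ker S` (so `A / Ker(T, S)` is a Lie algebra), and either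
`S_a = 0` for all `a`, or `S_a = -T_a` for all `a`. -/
theorem leibniz_irreducible_module_squares_in_kernel
    {K A M : Type*} [Field K]
    [AddCommGroup A] [Module K A] [FiniteDimensional K A]
    [AddCommGroup M] [Module K M] [FiniteDimensional K M] [Nontrivial M]
    (br : A →ₗ[K] A →ₗ[K] A)
    (leibniz : ∀ a b c : A, br a (br b c) = br (br a b) c + br b (br a c))
    (T S : A →ₗ[K] Module.End K M)
    (hTT : ∀ (a b : A) (m : M), T a (T b m) = T (br a b) m + T b (T a m))
    (hTS : ∀ (a b : A) (m : M), T a (S b m) = S b (T a m) + S (br a b) m)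
    (hST : ∀ (a b : A) (m : M), S (br a b) m = S b (S a m) + T a (S b m))
    (hirr : ∀ N : Submodule K M,
      (∀ (a : A), ∀ m ∈ N, T a m ∈ N ∧ S a m ∈ N) → N = ⊥ ∨ N = ⊤)
 :
    (∀ a : A, T (br a a) = 0 ∧ S (br a a) = 0) ∧
      ((∀ a : A, S a = 0) ∨ (∀ a : A, S a = -T a)) :=
  leibniz_irreducible_module_squares_in_kernel_general br T S hTT hTS hST hirr
end

section
/- Let A be a finite-dimensional (left) Leibniz algebra over a field of characteristic zero. Then A is solvable if and only if [A,A] is nilpotent. -/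
/-- Lower central series of a subalgebra `H` (computed inside the ambient algebra):
`lcsIn br H 0 = H`, `lcsIn br H (n+1) = [H, lcsIn br H n]`.
A subalgebra `H` is nilpotent iff some term vanishes. -/
def lcsIn {K A : Type*} [Field K] [AddCommGroup A] [Module K A]
    (br : A →ₗ[K] A →ₗ[K] A) (H : Submodule K A) : ℕ → Submodule K A
  | 0 => H
  | n + 1 => bracketSpan br H (lcsIn br H n)

/-!
The left multiplications `[a, ·]` form a Lie algebra `g` of endomorphisms of `A` (this is the
Leibniz identity), which is solvable when `A` is, and `[A, A]` acts on `A` through `[g, g]`.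
Over an algebraically closed field, Lie's theorem gives a weight vector in every nonzero quotient
`A / N` by a `g`-submodule, and `[g, g]` kills weight spaces; so every proper `g`-submodule `N` lies
strictly inside one that `[g, g]` maps into `N`, and descending induction makes each element of
`[g, g]` nilpotent. This descends to `K` by extension of scalars, and Engel's theorem turns `A`
into a nilpotent `[g, g]`-module, whose lower central series dominates that of `[A, A]`.
Conversely, the derived series of `A` is dominated termwise by the lower central series of
`[A, A]`.
-/

namespace LieModule

open LieAlgebra TensorProduct

variable {K L M : Type*} [Field K] [LieRing L] [LieAlgebra K L]
  [AddCommGroup M] [Module K M] [LieRingModule L M] [LieModule K L M]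

lemma lie_eq_zero_of_mem_derivedSeries_of_mem_weightSpace {χ : L → K} {x : L}
    (hx : x ∈ derivedSeries K L 1) {m : M} (hm : m ∈ weightSpace M χ) : ⁅x, m⁆ = 0 := by
  rw [mem_weightSpace] at hm
  rw [derivedSeries_def, derivedSeriesOfIdeal_succ, derivedSeriesOfIdeal_zero,
    ← LieSubmodule.mem_toSubmodule, LieSubmodule.lieIdeal_oper_eq_linear_span] at hx
  induction hx using Submodule.span_induction with
  | mem y hy =>
    obtain ⟨⟨a, -⟩, ⟨b, -⟩, rfl⟩ := hy
    rw [lie_lie, hm b, hm a, lie_smul, lie_smul, hm a, hm b, smul_smul, smul_smul, mul_comm,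
      sub_self]
  | zero => rw [zero_lie]
  | add y z _ _ hy hz => rw [add_lie, hy, hz, add_zero]
  | smul t y _ hy => rw [smul_lie, hy, smul_zero]

variable [CharZero K] [IsSolvable L] [FiniteDimensional K M]

lemma exists_pow_toEnd_mem_of_mem_derivedSeries [IsAlgClosed K] {x : L}
    (hx : x ∈ derivedSeries K L 1) (N : LieSubmodule K L M) :
    ∃ k, ∀ m : M, (toEnd K L M x ^ k) m ∈ N := by
  induction N using WellFoundedGT.induction with
  | _ N ih =>
  rcases eq_or_ne N ⊤ with rfl | hN
  · exact ⟨0, fun m => LieSubmodule.mem_top m⟩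
  have : Nontrivial (M ⧸ N) := Submodule.Quotient.nontrivial_iff.2 (by simpa using hN)
  obtain ⟨χ, hχ⟩ := exists_nontrivial_weightSpace_of_isSolvable K L (M ⧸ N)
  set N' := (weightSpace (M ⧸ N) χ).comap (LieSubmodule.Quotient.mk' N)
  have hxN' : ∀ m ∈ N', ⁅x, m⁆ ∈ N := fun m hm => by
    rw [← LieSubmodule.Quotient.mk_eq_zero, LieModuleHom.map_lie]
    exact lie_eq_zero_of_mem_derivedSeries_of_mem_weightSpace hx hm
  have hNN' : N < N' := by
    refine lt_of_le_of_ne (fun m hm => ?_) fun h => ?_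
    · rw [LieSubmodule.mem_comap, (LieSubmodule.Quotient.mk_eq_zero N).2 hm]
      exact zero_mem _
    · obtain ⟨⟨w, hw⟩, hw0⟩ := exists_ne (0 : weightSpace (M ⧸ N) χ)
      obtain ⟨m, rfl⟩ := LieSubmodule.Quotient.surjective_mk' N w
      have hm : m ∈ N := h ▸ hw
      exact hw0 (by simpa [LieSubmodule.Quotient.mk_eq_zero] using hm)
  obtain ⟨k, hk⟩ := ih N' hNN'
  exact ⟨k + 1, fun m => by rw [pow_succ', Module.End.mul_apply]; exact hxN' _ (hk m)⟩

theorem isNilpotent_derivedSeries_of_isSolvable : IsNilpotent (derivedSeries K L 1) M := by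
  rw [isNilpotent_iff_forall' (R := K)]
  rintro ⟨x, hx⟩
  set F := AlgebraicClosure K
  have hx_ext : 1 ⊗ₜ[K] x ∈ derivedSeries F (F ⊗[K] L) 1 := by
    rw [derivedSeries_baseChange]
    exact Submodule.tmul_mem_baseChange_of_mem 1 hx
  obtain ⟨k, hk⟩ := exists_pow_toEnd_mem_of_mem_derivedSeries (M := F ⊗[K] M) hx_ext ⊥
  have : _root_.IsNilpotent ((toEnd K L M x).baseChange F) := by
    rw [← toEnd_baseChange]
    exact ⟨k, LinearMap.ext fun m => (LieSubmodule.mem_bot _).1 (hk m)⟩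
  exact (IsNilpotent.map_iff (f := Module.End.baseChangeHom K F M)
    (LinearMap.baseChangeHom_injective K M F)).1 this

end LieModule

namespace LeibnizAlgebra

open LieAlgebra

attribute [local instance] LieRing.ofAssociativeRing

variable {K A : Type*} [Field K] [AddCommGroup A] [Module K A] {br : A →ₗ[K] A →ₗ[K] A}

theorem bracketSpan_le {p q r : Submodule K A} :
    bracketSpan br p q ≤ r ↔ ∀ a ∈ p, ∀ b ∈ q, br a b ∈ r := by
  refine ⟨fun h a ha b hb => h (Submodule.subset_span ⟨a, ha, b, hb, rfl⟩), fun h => ?_⟩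
  rw [bracketSpan, Submodule.span_le]
  rintro _ ⟨a, ha, b, hb, rfl⟩
  exact h a ha b hb

theorem mem_bracketSpan {p q : Submodule K A} {a b : A} (ha : a ∈ p) (hb : b ∈ q) :
    br a b ∈ bracketSpan br p q :=
  Submodule.subset_span ⟨a, ha, b, hb, rfl⟩

theorem bracketSpan_mono {p q p' q' : Submodule K A} (hp : p ≤ p') (hq : q ≤ q') :
    bracketSpan br p q ≤ bracketSpan br p' q' :=
  bracketSpan_le.2 fun _ ha _ hb => mem_bracketSpan (hp ha) (hq hb)

theorem derSeries_succ_le_lcsIn (n : ℕ) :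
    derSeries br (n + 1) ≤ lcsIn br (bracketSpan br ⊤ ⊤) n := by
  induction n with
  | zero => exact le_rfl
  | succ n ih => exact bracketSpan_mono (bracketSpan_mono le_top le_top) ih

theorem lie_br_eq (leibniz : ∀ a b c : A, br a (br b c) = br (br a b) c + br b (br a c))
    (a b : A) : ⁅br a, br b⁆ = br (br a b) :=
  LinearMap.ext fun c => by simp [Ring.lie_def, leibniz a b c]

variable (leibniz : ∀ a b c : A, br a (br b c) = br (br a b) c + br b (br a c))

variable (br) in
def leftMulSubalgebra : LieSubalgebra K (Module.End K A) :=
  { LinearMap.range br with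
    lie_mem' := by
      rintro _ _ ⟨a, rfl⟩ ⟨b, rfl⟩
      exact ⟨br a b, (lie_br_eq leibniz a b).symm⟩ }

theorem coe_mem_map_derSeries_of_mem_derivedSeries (k : ℕ)
    {f : leftMulSubalgebra br leibniz}
    (hf : f ∈ derivedSeries K (leftMulSubalgebra br leibniz) k) :
    (f : Module.End K A) ∈ (derSeries br k).map br := by
  induction k generalizing f with
  | zero =>
    rw [derSeries, Submodule.map_top]
    exact f.2
  | succ k ih =>
    rw [derivedSeries_def, derivedSeriesOfIdeal_succ, ← LieSubmodule.mem_toSubmodule,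
      LieSubmodule.lieIdeal_oper_eq_linear_span] at hf
    induction hf using Submodule.span_induction with
    | mem y hy =>
      obtain ⟨⟨u, hu⟩, ⟨v, hv⟩, rfl⟩ := hy
      obtain ⟨a, ha, hua⟩ := ih hu
      obtain ⟨b, hb, hvb⟩ := ih hv
      exact ⟨br a b, mem_bracketSpan ha hb, by simp [← hua, ← hvb, lie_br_eq leibniz]⟩
    | zero => exact zero_mem _
    | add y z _ _ hy hz => exact add_mem hy hz
    | smul t y _ hy => exact Submodule.smul_mem _ t hy

theorem isSolvable_leftMulSubalgebra (hsolv : ∃ m, derSeries br m = ⊥) :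
    IsSolvable (leftMulSubalgebra br leibniz) := by
  obtain ⟨m, hm⟩ := hsolv
  refine IsSolvable.mk (k := m) ((LieSubmodule.eq_bot_iff (derivedSeries K _ m)).2 fun f hf => ?_)
  have := coe_mem_map_derSeries_of_mem_derivedSeries leibniz m hf
  rw [hm, Submodule.map_bot, Submodule.mem_bot] at this
  exact Subtype.ext this

variable (br) in
def leftMul : A →ₗ[K] leftMulSubalgebra br leibniz :=
  LinearMap.codRestrict _ br fun a => ⟨a, rfl⟩

theorem bracketSpan_top_le_comap_leftMul_derivedSeries_one :
    bracketSpan br ⊤ ⊤ ≤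
      (derivedSeries K (leftMulSubalgebra br leibniz) 1).toSubmodule.comap (leftMul br leibniz) :=
  bracketSpan_le.2 fun a _ b _ => by
    have : leftMul br leibniz (br a b) = ⁅leftMul br leibniz a, leftMul br leibniz b⁆ :=
      Subtype.ext (lie_br_eq leibniz a b).symm
    rw [Submodule.mem_comap, this]
    exact LieSubmodule.lie_mem_lie (LieSubmodule.mem_top _) (LieSubmodule.mem_top _)

theorem lcsIn_le_lowerCentralSeries (k : ℕ) :
    lcsIn br (bracketSpan br ⊤ ⊤) k ≤ (LieModule.lowerCentralSeries K
      (derivedSeries K (leftMulSubalgebra br leibniz) 1) A k).toSubmodule := by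
  induction k with
  | zero => exact le_top
  | succ k ih =>
    refine bracketSpan_le.2 fun a ha b hb => ?_
    rw [LieSubmodule.mem_toSubmodule, LieModule.lowerCentralSeries_succ]
    exact LieSubmodule.lie_mem_lie (x := ⟨leftMul br leibniz a,
      bracketSpan_top_le_comap_leftMul_derivedSeries_one leibniz ha⟩)
      (LieSubmodule.mem_top _) (ih hb)

end LeibnizAlgebra

/-- a finite-dimensional (left) Leibniz algebra over a field of
characteristic zero is solvable iff its derived subalgebra `[A, A]` is nilpotent. -/
theorem leibniz_solvable_iff_derived_nilpotent
    {K A : Type*} [Field K] [CharZero K]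
    [AddCommGroup A] [Module K A] [FiniteDimensional K A]
    (br : A →ₗ[K] A →ₗ[K] A)
    (leibniz : ∀ a b c : A, br a (br b c) = br (br a b) c + br b (br a c)) :
    (∃ m : ℕ, derSeries br m = ⊥) ↔
      ∃ m : ℕ, lcsIn br (bracketSpan br (⊤ : Submodule K A) ⊤) m = ⊥ := by
  refine ⟨fun hsolv => ?_, fun ⟨m, hm⟩ =>
    ⟨m + 1, eq_bot_iff.2 (hm ▸ LeibnizAlgebra.derSeries_succ_le_lcsIn m)⟩⟩
  have := LeibnizAlgebra.isSolvable_leftMulSubalgebra leibniz hsolv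
  obtain ⟨k, hk⟩ := (LieModule.isNilpotent_iff K _ A).1
    (LieModule.isNilpotent_derivedSeries_of_isSolvable (K := K)
      (L := LeibnizAlgebra.leftMulSubalgebra br leibniz))
  refine ⟨k, eq_bot_iff.2 ?_⟩
  calc lcsIn br (bracketSpan br ⊤ ⊤) k
      ≤ (LieModule.lowerCentralSeries K _ A k).toSubmodule :=
        LeibnizAlgebra.lcsIn_le_lowerCentralSeries leibniz k
    _ = ⊥ := by rw [hk]; rfl
end

section
/- Let A be a finite-dimensional (left) Leibniz algebra over a field, let L be a Lie subset of A that spans A, and let M be a nonzero finite-dimensional A-module with associated representation (T, S). Suppose that T_a is a nilpotent operator for every a ∈ L. Then A acts nilpotently on M (there exists n such that every composition of n operators, each of the form T_a or S_a with a ∈ A, is zero), and there exists a nonzero m ∈ M such that [a,m] = 0 = [m,a] for all a ∈ A. -/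
/-!
The heart of the proof is Jacobson's refinement of Engel's theorem: a Lie-closed set `W` of
nilpotent elements of a finite-dimensional algebra spans a nilpotent subspace, i.e.
`(span W) ^ N = 0`. Take a maximal Lie-closed `W' ⊆ W` with smaller span; by induction `span W'`
is nilpotent, hence so are the commutator operators `ad x`, `x ∈ W'`. Iterating them on an element
of `W` outside `span W'` produces `w ∈ W \ span W'` normalizing `span W'`, and by maximality
`span W = span W' + K w`, which is nilpotent because `w` only moves past `span W'` at the cost of
terms in `span W'`.

Applied to `T '' L`, this makes `range T` nilpotent in `End M`. The module axioms give
`S_b S_a = -S_b T_a` and `T_a S_b = S_b T_a + S_[a,b]`, so `range S` is nilpotent as well and the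
left `T`s can be pushed to the right through the `S`s; hence `range S ⊔ range T` is nilpotent, which
is the first claim, and a nonzero vector killed by it is the second.
-/

namespace Submodule

section Semiring

variable {R A : Type*} [CommSemiring R] [Semiring A] [Algebra R A]

theorem isNilpotent_of_le {P P' : Submodule R A} (h : P ≤ P') (hP' : IsNilpotent P') :
    IsNilpotent P := by
  obtain ⟨n, hn⟩ := hP'
  exact ⟨n, le_bot_iff.mp ((pow_le_pow_left' h n).trans (hn.trans zero_eq_bot).le)⟩

theorem isNilpotent_of_mul_self_le_mul {P Q : Submodule R A} (hPP : P * P ≤ P * Q)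
    (hQ : IsNilpotent Q) : IsNilpotent P := by
  obtain ⟨n, hn⟩ := hQ
  have hpow : ∀ k, P ^ (k + 1) ≤ P * Q ^ k := by
    intro k
    induction k with
    | zero => simp
    | succ k ih => calc
        P ^ (k + 2) = P * P ^ (k + 1) := pow_succ' P _
        _ ≤ P * P * Q ^ k := by rw [mul_assoc]; exact mul_le_mul' le_rfl ih
        _ ≤ P * Q * Q ^ k := mul_le_mul' hPP le_rfl
        _ = P * Q ^ (k + 1) := by rw [mul_assoc, ← pow_succ']
  exact ⟨n + 1, le_bot_iff.mp ((hpow n).trans (by rw [hn, mul_zero, zero_eq_bot]))⟩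

theorem iSup_pow_mul_iSup_pow_le (Q : Submodule R A) :
    (⨆ n, Q ^ n) * (⨆ n, Q ^ n) ≤ ⨆ n, Q ^ n := by
  simp only [iSup_mul, mul_iSup, ← pow_add]
  exact iSup_le fun m => iSup_le fun n => le_iSup (Q ^ ·) (n + m)

theorem iSup_pow_mul_le_mul_iSup_pow {P Q : Submodule R A} (hQP : Q * P ≤ P * Q ⊔ P) :
    (⨆ n, Q ^ n) * P ≤ P * ⨆ n, Q ^ n := by
  set U := ⨆ n, Q ^ n
  have hQU : Q * U ≤ U := by
    rw [mul_iSup]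
    exact iSup_le fun n => pow_succ' Q n ▸ le_iSup (Q ^ ·) (n + 1)
  rw [iSup_mul]
  refine iSup_le fun n => ?_
  induction n with
  | zero =>
    rw [pow_zero, one_mul]
    exact (mul_one P).ge.trans (mul_le_mul' le_rfl (le_iSup_of_le 0 (pow_zero Q).ge))
  | succ n ih => calc
      Q ^ (n + 1) * P = Q * (Q ^ n * P) := by rw [pow_succ', mul_assoc]
      _ ≤ Q * (P * U) := mul_le_mul' le_rfl ih
      _ ≤ (P * Q ⊔ P) * U := by rw [← mul_assoc]; exact mul_le_mul' hQP le_rfl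
      _ = P * (Q * U) ⊔ P * U := by rw [sup_mul, mul_assoc]
      _ ≤ P * U := _root_.sup_le (mul_le_mul' le_rfl hQU) le_rfl

theorem isNilpotent_sup_of_mul_self_le_self {P Q : Submodule R A} (hPP : P * P ≤ P)
    (hP : IsNilpotent P) (hQ : IsNilpotent Q) (hQP : Q * P ≤ P * Q ⊔ P) :
    IsNilpotent (P ⊔ Q) := by
  obtain ⟨a, ha⟩ := hP
  obtain ⟨b, hb⟩ := hQ
  -- `U` is the unital algebra generated by `Q`; `P * U` absorbs every word with a letter in `P`.
  set U := ⨆ n, Q ^ n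
  have hQn : ∀ n, Q ^ n ≤ U := le_iSup (Q ^ ·)
  have hU1 : 1 ≤ U := pow_zero Q ▸ hQn 0
  have hUQ : U * Q ≤ U := by
    rw [iSup_mul]
    exact iSup_le fun n => pow_succ Q n ▸ hQn (n + 1)
  have hUP : U * P ≤ P * U := iSup_pow_mul_le_mul_iSup_pow hQP
  have hPU : ∀ n, (P * U) ^ n ≤ P ^ n * U := by
    intro n
    induction n with
    | zero => simpa using hU1
    | succ n ih => calc
        (P * U) ^ (n + 1) ≤ P ^ n * U * (P * U) := pow_succ (P * U) n ▸ mul_le_mul' ih le_rfl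
        _ = P ^ n * (U * P) * U := by simp only [mul_assoc]
        _ ≤ P ^ n * (P * U) * U := mul_le_mul' (mul_le_mul' le_rfl hUP) le_rfl
        _ = P ^ (n + 1) * (U * U) := by simp only [pow_succ, mul_assoc]
        _ ≤ P ^ (n + 1) * U := mul_le_mul' le_rfl (iSup_pow_mul_iSup_pow_le Q)
  have hPQ : ∀ n, (P ⊔ Q) ^ n ≤ Q ^ n ⊔ P * U := by
    intro n
    induction n with
    | zero => exact le_sup_left
    | succ n ih =>
      rw [pow_succ, pow_succ]
      refine (mul_le_mul' ih le_rfl).trans ?_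
      rw [sup_mul, mul_sup, mul_sup]
      refine _root_.sup_le (_root_.sup_le ?_ le_sup_left) (_root_.sup_le ?_ ?_)
      · exact le_sup_of_le_right ((mul_le_mul' (hQn n) le_rfl).trans hUP)
      · refine le_sup_of_le_right (calc
          P * U * P ≤ P * (P * U) := by rw [mul_assoc]; exact mul_le_mul' le_rfl hUP
          _ ≤ P * U := by rw [← mul_assoc]; exact mul_le_mul' hPP le_rfl)
      · exact le_sup_of_le_right (by rw [mul_assoc]; exact mul_le_mul' le_rfl hUQ)
  refine ⟨b * a, le_bot_iff.mp ?_⟩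
  calc (P ⊔ Q) ^ (b * a) = ((P ⊔ Q) ^ b) ^ a := pow_mul _ b a
    _ ≤ (P * U) ^ a := pow_le_pow_left' (by simpa [hb] using hPQ b) a
    _ ≤ ⊥ := by simpa [ha] using hPU a

theorem isNilpotent_sup {P Q : Submodule R A} (hP : IsNilpotent P) (hQ : IsNilpotent Q)
    (hQP : Q * P ≤ P * Q ⊔ P) : IsNilpotent (P ⊔ Q) := by
  obtain ⟨a, ha⟩ := hP
  -- pass to the non-unital algebra generated by `P`, which is closed under multiplication
  set B := ⨆ n, P ^ (n + 1)
  have hPB : ∀ n, P ^ (n + 1) ≤ B := le_iSup (fun n => P ^ (n + 1))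
  have hBB : B * B ≤ B := by
    simp only [B, iSup_mul, mul_iSup, ← pow_add]
    exact iSup_le fun m => iSup_le fun n => by
      rw [show n + 1 + (m + 1) = n + m + 1 + 1 by ring]; exact hPB _
  have hBpow : ∀ m, B ^ m ≤ ⨆ n, P ^ (n + m) := by
    intro m
    induction m with
    | zero => exact le_iSup_of_le 0 le_rfl
    | succ m ih =>
      rw [pow_succ]
      refine (mul_le_mul' ih le_rfl).trans ?_
      simp only [B, iSup_mul, mul_iSup, ← pow_add]
      exact iSup_le fun n => iSup_le fun k => le_iSup_of_le (n + k) (by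
        rw [show k + m + (n + 1) = n + k + (m + 1) by ring])
  have hQP' : ∀ n, Q * P ^ (n + 1) ≤ P ^ (n + 1) * Q ⊔ P ^ (n + 1) := by
    intro n
    induction n with
    | zero => simpa using hQP
    | succ n ih => calc
        Q * P ^ (n + 2) = Q * P * P ^ (n + 1) := by rw [mul_assoc, ← pow_succ']
        _ ≤ (P * Q ⊔ P) * P ^ (n + 1) := mul_le_mul' hQP le_rfl
        _ = P * (Q * P ^ (n + 1)) ⊔ P ^ (n + 2) := by rw [sup_mul, mul_assoc, ← pow_succ']
        _ ≤ P * (P ^ (n + 1) * Q ⊔ P ^ (n + 1)) ⊔ P ^ (n + 2) := by gcongr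
        _ = P ^ (n + 2) * Q ⊔ P ^ (n + 2) := by
          rw [mul_sup, ← mul_assoc, ← pow_succ', sup_assoc, sup_idem]
  have hQB : Q * B ≤ B * Q ⊔ B := by
    simp only [B, mul_iSup, iSup_mul]
    exact iSup_le fun n => (hQP' n).trans (sup_le_sup (le_iSup_of_le n le_rfl) (hPB n))
  have hB : IsNilpotent B := ⟨a, le_bot_iff.mp <| (hBpow a).trans <| iSup_le fun n => by
    rw [pow_add, ha, mul_zero, zero_eq_bot]⟩
  exact isNilpotent_of_le (sup_le_sup_right (pow_one P ▸ hPB 0) Q)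
    (isNilpotent_sup_of_mul_self_le_self hBB hB hQ hQB)

end Semiring

theorem exists_mem_notMem_forall_apply_mem {R V : Type*} [CommSemiring R] [AddCommMonoid V]
    [Module R V] {𝒜 : Submodule R (Module.End R V)} (h𝒜 : IsNilpotent 𝒜)
    {F : Set (Module.End R V)} (hF : F ⊆ 𝒜) {X : Set V} (hFX : ∀ f ∈ F, ∀ x ∈ X, f x ∈ X)
    (P : Submodule R V) {x₀ : V} (hx₀ : x₀ ∈ X) (hx₀P : x₀ ∉ P) :
    ∃ x ∈ X, x ∉ P ∧ ∀ f ∈ F, f x ∈ P := by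
  obtain ⟨n, hn⟩ := h𝒜
  suffices ∀ c, ∀ x ∈ X, x ∉ P → (∀ g ∈ 𝒜 ^ c, g x ∈ P) → ∃ x ∈ X, x ∉ P ∧ ∀ f ∈ F, f x ∈ P from
    this n x₀ hx₀ hx₀P fun g hg => by
      rw [hn, zero_eq_bot, mem_bot] at hg
      simp [hg]
  intro c
  induction c with
  | zero => exact fun x _ hxP hx => absurd (hx 1 (pow_zero 𝒜 ▸ one_le.mp le_rfl)) hxP
  | succ c ih =>
    intro x hx hxP hxc
    by_cases hFx : ∀ f ∈ F, f x ∈ P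
    · exact ⟨x, hx, hxP, hFx⟩
    push Not at hFx
    obtain ⟨f, hf, hfx⟩ := hFx
    exact ih (f x) (hFX f hf x hx) hfx fun g hg =>
      hxc (g * f) (pow_succ 𝒜 c ▸ mul_mem_mul hg (hF hf))

section Ring

attribute [local instance] LieRing.ofAssociativeRing

variable {R E : Type*} [CommRing R] [Ring E] [Algebra R E]

theorem isNilpotent_map_mul_flip {P : Submodule R E} (hP : IsNilpotent P) :
    IsNilpotent (P.map (LinearMap.mul R E).flip) := by
  obtain ⟨n, hn⟩ := hP
  have hmul : ∀ P' : Submodule R E,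
      P.map (LinearMap.mul R E).flip * P'.map (LinearMap.mul R E).flip ≤
        (P' * P).map (LinearMap.mul R E).flip := by
    intro P'
    refine mul_le.mpr ?_
    rintro _ ⟨a, ha, rfl⟩ _ ⟨b, hb, rfl⟩
    refine ⟨b * a, mul_mem_mul hb ha, ?_⟩
    ext x
    simp [mul_assoc]
  have hpow : ∀ k, P.map (LinearMap.mul R E).flip ^ k ≤ (P ^ k).map (LinearMap.mul R E).flip := by
    intro k
    induction k with
    | zero => exact one_le.mpr ⟨1, one_le.mp le_rfl, by ext; simp⟩
    | succ k ih =>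
      rw [pow_succ', pow_succ]
      exact (mul_le_mul' le_rfl ih).trans (hmul _)
  exact ⟨n, le_bot_iff.mp ((hpow n).trans (by simp [hn]))⟩

theorem isNilpotent_span_image_ad {P : Submodule R E} (hP : IsNilpotent P) :
    IsNilpotent (span R (LieAlgebra.ad R E '' P)) := by
  set Lm := P.map (Algebra.lmul R E).toLinearMap
  set Rm := P.map (LinearMap.mul R E).flip
  have hL : IsNilpotent Lm := by
    obtain ⟨n, hn⟩ := hP
    exact ⟨n, by rw [← Submodule.map_pow, hn, zero_eq_bot, map_bot, zero_eq_bot]⟩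
  have hRL : Rm * Lm ≤ Lm * Rm ⊔ Lm := by
    refine le_sup_of_le_left (mul_le.mpr ?_)
    rintro _ ⟨a, ha, rfl⟩ _ ⟨b, hb, rfl⟩
    have hba : Commute ((Algebra.lmul R E).toLinearMap b) ((LinearMap.mul R E).flip a) :=
      LinearMap.commute_mulLeft_right b a
    rw [← hba.eq]
    exact mul_mem_mul (mem_map_of_mem hb) (mem_map_of_mem ha)
  refine isNilpotent_of_le (span_le.mpr ?_) (isNilpotent_sup hL (isNilpotent_map_mul_flip hP) hRL)
  rintro _ ⟨x, hx, rfl⟩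
  rw [LieAlgebra.ad_eq_lmul_left_sub_lmul_right]
  exact sub_mem (mem_sup_left (mem_map_of_mem hx)) (mem_sup_right (mem_map_of_mem hx))

theorem exists_mem_notMem_span_commutator_mem {W' W : Set E}
    (hW : ∀ x ∈ W', ∀ y ∈ W, x * y - y * x ∈ W) (hP : IsNilpotent (span R W')) {w₀ : E}
    (hw₀ : w₀ ∈ W) (hw₀P : w₀ ∉ span R W') :
    ∃ w ∈ W, w ∉ span R W' ∧ ∀ p ∈ span R W', p * w - w * p ∈ span R W' := by
  obtain ⟨w, hwW, hwP, hw⟩ := exists_mem_notMem_forall_apply_mem (isNilpotent_span_image_ad hP)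
    ((Set.image_mono subset_span).trans subset_span) (X := W)
    (by rintro _ ⟨x, hx, rfl⟩ y hy; exact hW x hx y hy) _ hw₀ hw₀P
  refine ⟨w, hwW, hwP, fun p hp => ?_⟩
  induction hp using span_induction with
  | mem x hx => exact hw _ ⟨x, hx, rfl⟩
  | zero => simp
  | add x y _ _ hx hy =>
    rw [add_mul, mul_add, add_sub_add_comm]
    exact add_mem hx hy
  | smul c x _ hx =>
    rw [smul_mul_assoc, mul_smul_comm, ← smul_sub]
    exact smul_mem _ c hx

theorem isNilpotent_span_singleton_sup {P : Submodule R E} (hP : IsNilpotent P) {w : E}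
    (hw : IsNilpotent w) (hPw : ∀ p ∈ P, p * w - w * p ∈ P) : IsNilpotent (R ∙ w ⊔ P) := by
  have hwnil : IsNilpotent (R ∙ w) := by
    obtain ⟨m, hm⟩ := hw
    exact ⟨m, by rw [span_pow, Set.singleton_pow, hm, span_zero_singleton, zero_eq_bot]⟩
  have hwP : (R ∙ w) * P ≤ P * (R ∙ w) ⊔ P := by
    refine mul_le.mpr fun q hq p hp => ?_
    obtain ⟨c, rfl⟩ := mem_span_singleton.mp hq
    rw [smul_mul_assoc, show w * p = p * w - (p * w - w * p) by abel]
    exact smul_mem _ c <| sub_mem (mem_sup_left (mul_mem_mul hp (mem_span_singleton_self w)))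
      (mem_sup_right (hPw p hp))
  exact isNilpotent_of_le (sup_comm _ _).le (isNilpotent_sup hP hwnil hwP)

end Ring

end Submodule

def LieSubalgebra.ofSpan (R : Type*) {L : Type*} [CommRing R] [LieRing L] [LieAlgebra R L]
    {W : Set L} (hW : ∀ x ∈ W, ∀ y ∈ W, ⁅x, y⁆ ∈ W) : LieSubalgebra R L where
  toSubmodule := Submodule.span R W
  lie_mem' {x y} hx hy := by
    have := Submodule.apply_mem_map₂ (LieModule.toEnd R L L : L →ₗ[R] Module.End R L) hx hy
    rw [Submodule.map₂_span_span] at this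
    refine Submodule.span_le.mpr ?_ this
    rintro _ ⟨x, hx, y, hy, rfl⟩
    exact Submodule.subset_span (hW x hx y hy)

section Jacobson

attribute [local instance] LieRing.ofAssociativeRing

open Submodule

variable {K E : Type*} [Field K] [Ring E] [Algebra K E]

theorem Submodule.isNilpotent_span_of_lieClosed [FiniteDimensional K E] {W : Set E}
    (hW : ∀ x ∈ W, ∀ y ∈ W, x * y - y * x ∈ W) (hnil : ∀ x ∈ W, IsNilpotent x) :
    IsNilpotent (span K W) := by
  induction hd : Module.finrank K (span K W) using Nat.strong_induction_on generalizing W with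
  | _ d ih =>
  obtain hbot | hne := eq_or_ne (span K W) ⊥
  · exact ⟨1, by rw [pow_one, hbot, zero_eq_bot]⟩
  obtain ⟨_, ⟨W', hW'W, hW', rfl, hlt⟩, hmax⟩ := wellFounded_gt.has_min
    {p : Submodule K E | ∃ W' ⊆ W, (∀ x ∈ W', ∀ y ∈ W', x * y - y * x ∈ W') ∧ span K W' = p ∧
      p < span K W}
    ⟨⊥, ∅, Set.empty_subset W, by simp, span_empty, bot_lt_iff_ne_bot.mpr hne⟩
  set P := span K W'
  have hP : IsNilpotent P :=
    ih _ (hd ▸ finrank_lt_finrank_of_lt hlt) hW' (fun x hx => hnil x (hW'W hx)) rfl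
  obtain ⟨w₀, hw₀, hw₀P⟩ : ∃ w₀ ∈ W, w₀ ∉ P := by
    by_contra! h
    exact hlt.not_ge (span_le.mpr h)
  obtain ⟨w, hwW, hwP, hw⟩ := exists_mem_notMem_span_commutator_mem
    (fun x hx y hy => hW x (hW'W hx) y hy) hP hw₀ hw₀P
  set 𝔭 := LieSubalgebra.ofSpan K hW'
  have h𝔭 : (𝔭 : Submodule K E) = P := rfl
  have hw𝔭 : w ∈ 𝔭.normalizer := (𝔭.mem_normalizer_iff' w).mpr hw
  set W₂ := W ∩ ((K ∙ w ⊔ P : Submodule K E) : Set E)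
  have hW₂ : ∀ x ∈ W₂, ∀ y ∈ W₂, x * y - y * x ∈ W₂ := by
    rintro x ⟨hxW, hx⟩ y ⟨hyW, hy⟩
    rw [← h𝔭] at hx hy
    exact ⟨hW x hxW y hyW, h𝔭 ▸ LieSubalgebra.lie_mem_sup_of_mem_normalizer hw𝔭 hx hy⟩
  have hPW₂ : P < span K W₂ := by
    refine SetLike.lt_iff_le_and_exists.mpr ⟨span_mono fun x hx => ⟨hW'W hx, ?_⟩, w, ?_, hwP⟩
    · exact mem_sup_right (subset_span hx)
    · exact subset_span ⟨hwW, mem_sup_left (mem_span_singleton_self w)⟩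
  have hspan : span K W ≤ K ∙ w ⊔ P := by
    by_contra h
    refine hmax _ ⟨W₂, Set.inter_subset_left, hW₂, rfl, ?_⟩ hPW₂
    exact lt_of_le_of_ne (span_mono Set.inter_subset_left)
      fun heq => h (heq ▸ span_le.mpr Set.inter_subset_right)
  exact isNilpotent_of_le hspan (isNilpotent_span_singleton_sup hP (hnil w hwW) hw)

end Jacobson

theorem isNilpotent_range_sup_range_of_isNilpotent_range {R A M : Type*} [CommRing R]
    [AddCommMonoid A] [Module R A] [AddCommGroup M] [Module R M] (br : A →ₗ[R] A →ₗ[R] A)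
    (T S : A →ₗ[R] Module.End R M)
    (hTS : ∀ (a b : A) (m : M), T a (S b m) = S b (T a m) + S (br a b) m)
    (hST : ∀ (a b : A) (m : M), S (br a b) m = S b (S a m) + T a (S b m))
    (hT : IsNilpotent (LinearMap.range T)) :
    IsNilpotent (LinearMap.range S ⊔ LinearMap.range T) := by
  have hSS : LinearMap.range S * LinearMap.range S ≤ LinearMap.range S * LinearMap.range T := by
    refine Submodule.mul_le.mpr ?_
    rintro _ ⟨b, rfl⟩ _ ⟨a, rfl⟩
    have : S b * S a = -(S b * T a) := LinearMap.ext fun m => by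
      have h := (hST a b m).trans (congrArg (S b (S a m) + ·) (hTS a b m))
      rw [← add_assoc, right_eq_add] at h
      exact eq_neg_of_add_eq_zero_left h
    rw [this]
    exact neg_mem (Submodule.mul_mem_mul ⟨b, rfl⟩ ⟨a, rfl⟩)
  have hTS' : LinearMap.range T * LinearMap.range S ≤
      LinearMap.range S * LinearMap.range T ⊔ LinearMap.range S := by
    refine Submodule.mul_le.mpr ?_
    rintro _ ⟨a, rfl⟩ _ ⟨b, rfl⟩
    rw [show T a * S b = S b * T a + S (br a b) from LinearMap.ext (hTS a b)]
    exact add_mem (Submodule.mem_sup_left (Submodule.mul_mem_mul ⟨b, rfl⟩ ⟨a, rfl⟩))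
      (Submodule.mem_sup_right ⟨br a b, rfl⟩)
  exact Submodule.isNilpotent_sup (Submodule.isNilpotent_of_mul_self_le_mul hSS hT) hT hTS'

theorem leibniz_engel_module_general
    {K A M : Type*} [Field K]
    [AddCommGroup A] [Module K A]
    [AddCommGroup M] [Module K M] [FiniteDimensional K M] [Nontrivial M]
    (br : A →ₗ[K] A →ₗ[K] A)
    (L : Set A)
    (hLclosed : ∀ a ∈ L, ∀ b ∈ L, br a b ∈ L)
    (hLspan : Submodule.span K L = ⊤)
    (T S : A →ₗ[K] Module.End K M)
    (hTT : ∀ (a b : A) (m : M), T a (T b m) = T (br a b) m + T b (T a m))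
    (hTS : ∀ (a b : A) (m : M), T a (S b m) = S b (T a m) + S (br a b) m)
    (hST : ∀ (a b : A) (m : M), S (br a b) m = S b (S a m) + T a (S b m))
    (hnil : ∀ a ∈ L, IsNilpotent (T a)) :
    (∃ n : ℕ, ∀ f : Fin n → Module.End K M,
      (∀ i : Fin n, ∃ a : A, f i = T a ∨ f i = S a) → (List.ofFn f).prod = 0) ∧
    ∃ m : M, m ≠ 0 ∧ ∀ a : A, T a m = 0 ∧ S a m = 0 := by
  have hTL : ∀ x ∈ T '' L, ∀ y ∈ T '' L, x * y - y * x ∈ T '' L := by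
    rintro _ ⟨a, ha, rfl⟩ _ ⟨b, hb, rfl⟩
    refine ⟨br a b, hLclosed a ha b hb, LinearMap.ext fun m => ?_⟩
    rw [LinearMap.sub_apply, Module.End.mul_apply, Module.End.mul_apply, hTT]
    abel
  have hT : IsNilpotent (LinearMap.range T) := by
    have := Submodule.isNilpotent_span_of_lieClosed (K := K) hTL
      (by rintro _ ⟨a, ha, rfl⟩; exact hnil a ha)
    rwa [Submodule.span_image, hLspan, Submodule.map_top] at this
  have hP := isNilpotent_range_sup_range_of_isNilpotent_range br T S hTS hST hT
  have hTP : ∀ a, T a ∈ LinearMap.range S ⊔ LinearMap.range T :=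
    fun a => Submodule.mem_sup_right ⟨a, rfl⟩
  have hSP : ∀ a, S a ∈ LinearMap.range S ⊔ LinearMap.range T :=
    fun a => Submodule.mem_sup_left ⟨a, rfl⟩
  constructor
  · obtain ⟨n, hn⟩ := hP
    refine ⟨n, fun f hf => ?_⟩
    have hfP : ∀ i, f i ∈ LinearMap.range S ⊔ LinearMap.range T := fun i => by
      obtain ⟨a, h | h⟩ := hf i <;> rw [h]
      exacts [hTP a, hSP a]
    have := Submodule.pow_subset_pow _ (Set.mem_pow.mpr ⟨fun i => ⟨f i, hfP i⟩, rfl⟩)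
    rwa [hn, Submodule.zero_eq_bot, SetLike.mem_coe, Submodule.mem_bot] at this
  · obtain ⟨m₀, hm₀⟩ := exists_ne (0 : M)
    obtain ⟨m, -, hm, hker⟩ := Submodule.exists_mem_notMem_forall_apply_mem hP subset_rfl
      (X := Set.univ) (fun _ _ _ _ => Set.mem_univ _) ⊥ (Set.mem_univ m₀) hm₀
    exact ⟨m, hm, fun a => ⟨hker _ (hTP a), hker _ (hSP a)⟩⟩

/-- Engel's theorem for modules: if a Lie subset `L` spanning `A` acts
by nilpotent operators `T_a` on a nonzero finite-dimensional module `M`, then `A`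
acts nilpotently on `M` (every composition of `n` operators of the form `T_a` or
`S_a` vanishes, for some `n`) and some nonzero `m ∈ M` is annihilated by all
`T_a` and `S_a`. -/
theorem leibniz_engel_module
    {K A M : Type*} [Field K]
    [AddCommGroup A] [Module K A] [FiniteDimensional K A]
    [AddCommGroup M] [Module K M] [FiniteDimensional K M] [Nontrivial M]
    (br : A →ₗ[K] A →ₗ[K] A)
    (leibniz : ∀ a b c : A, br a (br b c) = br (br a b) c + br b (br a c))
    (L : Set A)
    (hLclosed : ∀ a ∈ L, ∀ b ∈ L, br a b ∈ L)
    (hLspan : Submodule.span K L = ⊤)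
    (T S : A →ₗ[K] Module.End K M)
    (hTT : ∀ (a b : A) (m : M), T a (T b m) = T (br a b) m + T b (T a m))
    (hTS : ∀ (a b : A) (m : M), T a (S b m) = S b (T a m) + S (br a b) m)
    (hST : ∀ (a b : A) (m : M), S (br a b) m = S b (S a m) + T a (S b m))
    (hnil : ∀ a ∈ L, IsNilpotent (T a)) :
    (∃ n : ℕ, ∀ f : Fin n → Module.End K M,
      (∀ i : Fin n, ∃ a : A, f i = T a ∨ f i = S a) → (List.ofFn f).prod = 0) ∧
    ∃ m : M, m ≠ 0 ∧ ∀ a : A, T a m = 0 ∧ S a m = 0 :=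
  leibniz_engel_module_general br L hLclosed hLspan T S hTT hTS hST hnil
end

section
/- Let A be a finite-dimensional (left) Leibniz algebra over a field in which the left multiplication operator L_a is nilpotent for every a ∈ A. Then A is a nilpotent Leibniz algebra. -/
/-!
The Leibniz identity says exactly that `L_[a,b] = L_a L_b - L_b L_a`, so the left multiplications
form a Lie subalgebra `𝔤` of `End A`, and `A` is a `𝔤`-module on which every element of `𝔤` acts
nilpotently. Engel's theorem for Lie modules makes `A` a nilpotent `𝔤`-module, and since
`[a, x] = L_a x`, the lower central series of the Leibniz algebra `A` lies term by term inside the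
lower central series of this module.
-/

attribute [local instance] LieRing.ofAssociativeRing

section

variable {K A : Type*} [Field K] [AddCommGroup A] [Module K A] (br : A →ₗ[K] A →ₗ[K] A)

theorem lie_leftMul_eq_leftMul_bracket
    (leibniz : ∀ a b c : A, br a (br b c) = br (br a b) c + br b (br a c)) (a b : A) :
    ⁅br a, br b⁆ = br (br a b) := by
  ext c
  rw [LieRing.of_associative_ring_bracket, LinearMap.sub_apply, Module.End.mul_apply,
    Module.End.mul_apply, leibniz, add_sub_cancel_right]

def leftMulLieSubalgebra
    (leibniz : ∀ a b c : A, br a (br b c) = br (br a b) c + br b (br a c)) :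
    LieSubalgebra K (Module.End K A) :=
  { LinearMap.range br with
    lie_mem' := by
      rintro _ _ ⟨a, rfl⟩ ⟨b, rfl⟩
      exact ⟨br a b, (lie_leftMul_eq_leftMul_bracket br leibniz a b).symm⟩ }

theorem lcs_le_lowerCentralSeries (g : LieSubalgebra K (Module.End K A)) (hg : ∀ a, br a ∈ g)
    (n : ℕ) : lcs br n ≤ (LieModule.lowerCentralSeries K g A n : Submodule K A) := by
  induction n with
  | zero => simp [lcs]
  | succ n ih =>
    refine Submodule.span_le.mpr ?_
    rintro _ ⟨a, -, x, hx, rfl⟩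
    rw [LieModule.lowerCentralSeries_succ, SetLike.mem_coe, LieSubmodule.mem_toSubmodule]
    exact LieSubmodule.lie_mem_lie (x := (⟨br a, hg a⟩ : g)) (LieSubmodule.mem_top _) (ih hx)

theorem exists_lcs_eq_bot_of_isNilpotent (g : LieSubalgebra K (Module.End K A))
    (hg : ∀ a, br a ∈ g) [LieModule.IsNilpotent g A] : ∃ m, lcs br m = ⊥ := by
  obtain ⟨m, hm⟩ := LieModule.IsNilpotent.nilpotent K g A
  refine ⟨m, le_bot_iff.mp ?_⟩
  simpa [hm] using lcs_le_lowerCentralSeries br g hg m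

end

/-- Engel's theorem: a finite-dimensional (left) Leibniz algebra in
which every left multiplication operator is nilpotent is a nilpotent algebra. -/
theorem leibniz_engel
    {K A : Type*} [Field K]
    [AddCommGroup A] [Module K A] [FiniteDimensional K A]
    (br : A →ₗ[K] A →ₗ[K] A)
    (leibniz : ∀ a b c : A, br a (br b c) = br (br a b) c + br b (br a c))
    (hnil : ∀ a : A, IsNilpotent (br a)) :
    ∃ m : ℕ, lcs br m = ⊥ := by
  let g := leftMulLieSubalgebra br leibniz
  have hg : ∀ a, br a ∈ g := fun a ↦ LinearMap.mem_range_self br a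
  have : LieModule.IsNilpotent g A := by
    rw [LieModule.isNilpotent_iff_forall (R := K)]
    rintro ⟨_, a, rfl⟩
    exact hnil a
  exact exists_lcs_eq_bot_of_isNilpotent br g hg
end

section
/- Let A be a finite-dimensional semisimple (left) Leibniz algebra over an algebraically closed field of characteristic zero. Then the Killing form κ(a,b) = tr(L_a ∘ L_b) on A is nondegenerate, i.e. its radical A^⊥ = {b ∈ A : tr(L_b ∘ L_a) = 0 for all a ∈ A} equals Leib(A). -/
/-- Derived series of a subspace `I` (computed inside the ambient algebra):
`derSeriesIn br I 0 = I`, `derSeriesIn br I (n+1) = [derSeriesIn br I n, derSeriesIn br I n]`.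
A subalgebra/ideal `I` is solvable iff some term vanishes. -/
def derSeriesIn {K A : Type*} [Field K] [AddCommGroup A] [Module K A]
    (br : A →ₗ[K] A →ₗ[K] A) (I : Submodule K A) : ℕ → Submodule K A
  | 0 => I
  | n + 1 => bracketSpan br (derSeriesIn br I n) (derSeriesIn br I n)

/-- `Leib(A)`: the span of all squares `[a, a]`. -/
def leibIdeal {K A : Type*} [Field K] [AddCommGroup A] [Module K A]
    (br : A →ₗ[K] A →ₗ[K] A) : Submodule K A :=
  Submodule.span K {x | ∃ a : A, br a a = x}

attribute [local instance 100] LieRing.ofAssociativeRing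

open LinearMap

theorem LieSubalgebra.isSolvable_of_trace_mul_eq_zero {K V : Type*} [Field K] [CharZero K]
    [AddCommGroup V] [Module K V] [FiniteDimensional K V] (H : LieSubalgebra K (Module.End K V))
    (h : ∀ u ∈ H, ∀ v ∈ H, trace K V (u * v) = 0) : LieAlgebra.IsSolvable H := by
  set D := LieAlgebra.derivedSeries K H 1
  have : LieModule.IsNilpotent D V :=
    LieModule.isNilpotent_derivedSeries_of_traceForm_eq_zero (by ext u v; exact h u u.2 v v.2)
  -- `D` consists of nilpotent endomorphisms of `V`, so Engel's theorem makes it nilpotent.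
  have : LieRing.IsNilpotent D := by
    rw [LieAlgebra.isNilpotent_iff_forall (R := K)]
    intro x
    apply (D : LieSubalgebra K H).isNilpotent_ad_of_isNilpotent_ad
    exact LieAlgebra.isNilpotent_ad_of_isNilpotent
      (LieModule.isNilpotent_toEnd_of_isNilpotent K D V x)
  obtain ⟨k, hk⟩ := LieAlgebra.IsSolvable.solvable K D
  rw [LieIdeal.derivedSeries_eq_bot_iff] at hk
  refine LieAlgebra.IsSolvable.mk (R := K) (k := k + 1) ?_
  rwa [LieAlgebra.derivedSeries_def, LieAlgebra.derivedSeriesOfIdeal_add]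

section

variable {K A : Type*} [Field K] [AddCommGroup A] [Module K A]

def IsLeftLeibniz (br : A →ₗ[K] A →ₗ[K] A) : Prop :=
  ∀ a b c : A, br a (br b c) = br (br a b) c + br b (br a c)

def killingRadical (br : A →ₗ[K] A →ₗ[K] A) : Submodule K A where
  carrier := {b | ∀ a, trace K A (br b ∘ₗ br a) = 0}
  add_mem' hb hc a := by simp only [map_add, add_comp, hb a, hc a, add_zero]
  zero_mem' a := by simp only [map_zero, zero_comp]
  smul_mem' t b hb a := by simp only [map_smul, smul_comp, hb a, smul_zero]

namespace IsLeftLeibniz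

variable {br : A →ₗ[K] A →ₗ[K] A}

theorem br_br_eq_lie (hbr : IsLeftLeibniz br) (a b : A) : br (br a b) = ⁅br a, br b⁆ := by
  ext c
  exact eq_sub_of_add_eq (hbr a b c).symm

theorem leibIdeal_le_ker (hbr : IsLeftLeibniz br) : leibIdeal br ≤ ker br := by
  rw [leibIdeal, Submodule.span_le]
  rintro _ ⟨a, rfl⟩
  rw [SetLike.mem_coe, mem_ker, hbr.br_br_eq_lie, lie_self]

theorem br_mem_killingRadical_left (hbr : IsLeftLeibniz br) (a : A) {x : A}
    (hx : x ∈ killingRadical br) : br a x ∈ killingRadical br := by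
  intro c
  calc trace K A (br (br a x) * br c) = -trace K A (⁅br x, br a⁆ * br c) := by
        rw [hbr.br_br_eq_lie, ← lie_skew, neg_mul, map_neg]
    _ = -trace K A (br x ∘ₗ br (br a c)) := by
        rw [trace_lie_mul_eq, hbr.br_br_eq_lie]; rfl
    _ = 0 := by rw [hx, neg_zero]

theorem br_mem_killingRadical_right (hbr : IsLeftLeibniz br) (a : A) {x : A}
    (hx : x ∈ killingRadical br) : br x a ∈ killingRadical br := by
  intro c
  have hskew : br (br x a) = -br (br a x) := by
    rw [hbr.br_br_eq_lie, hbr.br_br_eq_lie, lie_skew]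
  rw [hskew, neg_comp, map_neg, hbr.br_mem_killingRadical_left a hx c, neg_zero]

def leftMulLieSubalgebra (hbr : IsLeftLeibniz br) (I : Submodule K A)
    (hI : ∀ x ∈ I, ∀ y ∈ I, br x y ∈ I) : LieSubalgebra K (Module.End K A) where
  toSubmodule := I.map br
  lie_mem' := by
    rintro _ _ ⟨x, hx, rfl⟩ ⟨y, hy, rfl⟩
    exact ⟨br x y, hI x hx y hy, hbr.br_br_eq_lie x y⟩

theorem map_derSeriesIn_le (hbr : IsLeftLeibniz br) {I : Submodule K A}
    (hI : ∀ x ∈ I, ∀ y ∈ I, br x y ∈ I) (k : ℕ) :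
    (derSeriesIn br I k).map br ≤
      (LieSubmodule.toSubmodule (LieAlgebra.derivedSeries K (hbr.leftMulLieSubalgebra I hI) k)).map
        (hbr.leftMulLieSubalgebra I hI).incl.toLinearMap := by
  induction k with
  | zero =>
    rintro _ ⟨x, hx, rfl⟩
    exact ⟨⟨br x, x, hx, rfl⟩, trivial, rfl⟩
  | succ k ih =>
    rw [derSeriesIn, bracketSpan, Submodule.map_span, Submodule.span_le]
    rintro _ ⟨_, ⟨x, hx, y, hy, rfl⟩, rfl⟩
    obtain ⟨u, hu, hux⟩ := ih ⟨x, hx, rfl⟩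
    obtain ⟨v, hv, hvy⟩ := ih ⟨y, hy, rfl⟩
    refine ⟨⁅u, v⁆, ?_, (congrArg₂ (⁅·, ·⁆) hux hvy).trans (hbr.br_br_eq_lie x y).symm⟩
    rw [LieAlgebra.derivedSeries_def, LieAlgebra.derivedSeriesOfIdeal_succ]
    exact LieSubmodule.lie_mem_lie hu hv

theorem exists_derSeriesIn_eq_bot (hbr : IsLeftLeibniz br) {I : Submodule K A}
    (hI : ∀ x ∈ I, ∀ y ∈ I, br x y ∈ I) [LieAlgebra.IsSolvable (hbr.leftMulLieSubalgebra I hI)] :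
    ∃ m, derSeriesIn br I m = ⊥ := by
  obtain ⟨k, hk⟩ := LieAlgebra.IsSolvable.solvable K (hbr.leftMulLieSubalgebra I hI)
  have hker : derSeriesIn br I k ≤ ker br := by
    have h := hbr.map_derSeriesIn_le hI k
    rwa [hk, LieSubmodule.bot_toSubmodule, Submodule.map_bot, Submodule.map_le_iff_le_comap,
      Submodule.comap_bot] at h
  refine ⟨k + 1, ?_⟩
  rw [eq_bot_iff, derSeriesIn, bracketSpan, Submodule.span_le]
  rintro _ ⟨x, hx, y, -, rfl⟩
  rw [mem_ker.mp (hker hx), LinearMap.zero_apply]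
  exact Submodule.zero_mem _

theorem exists_derSeriesIn_killingRadical_eq_bot [CharZero K] [FiniteDimensional K A]
    (hbr : IsLeftLeibniz br) : ∃ m, derSeriesIn br (killingRadical br) m = ⊥ := by
  have hS : ∀ x ∈ killingRadical br, ∀ y ∈ killingRadical br, br x y ∈ killingRadical br :=
    fun x _ _ hy ↦ hbr.br_mem_killingRadical_left x hy
  have := (hbr.leftMulLieSubalgebra _ hS).isSolvable_of_trace_mul_eq_zero <| by
    rintro _ ⟨x, hx, rfl⟩ _ ⟨y, -, rfl⟩
    exact hx y
  exact hbr.exists_derSeriesIn_eq_bot hS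

end IsLeftLeibniz

end

theorem semisimple_leibniz_killing_form_nondegenerate_general
    {K A : Type*} [Field K] [CharZero K]
    [AddCommGroup A] [Module K A] [FiniteDimensional K A]
    (br : A →ₗ[K] A →ₗ[K] A)
    (leibniz : ∀ a b c : A, br a (br b c) = br (br a b) c + br b (br a c))
    (hss : ∀ I : Submodule K A, (∀ a : A, ∀ x ∈ I, br a x ∈ I ∧ br x a ∈ I) →
      (∃ m : ℕ, derSeriesIn br I m = ⊥) → I ≤ leibIdeal br) :
    ∀ b : A, (∀ a : A, LinearMap.trace K A (br b ∘ₗ br a) = 0) ↔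
      b ∈ leibIdeal br := by
  have hbr : IsLeftLeibniz br := leibniz
  have hS : killingRadical br ≤ leibIdeal br :=
    hss _ (fun a _ hx ↦ ⟨hbr.br_mem_killingRadical_left a hx, hbr.br_mem_killingRadical_right a hx⟩)
      hbr.exists_derSeriesIn_killingRadical_eq_bot
  refine fun b ↦ ⟨fun hb ↦ hS hb, fun hb a ↦ ?_⟩
  rw [mem_ker.mp (hbr.leibIdeal_le_ker hb), zero_comp, map_zero]

/-- the Killing form `κ(a, b) = tr(L_a ∘ L_b)` of a finite-dimensional
semisimple (left) Leibniz algebra over an algebraically closed field of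
characteristic zero is nondegenerate: its radical equals `Leib(A)`. -/
theorem semisimple_leibniz_killing_form_nondegenerate
    {K A : Type*} [Field K] [IsAlgClosed K] [CharZero K]
    [AddCommGroup A] [Module K A] [FiniteDimensional K A]
    (br : A →ₗ[K] A →ₗ[K] A)
    (leibniz : ∀ a b c : A, br a (br b c) = br (br a b) c + br b (br a c))
    (hss : ∀ I : Submodule K A, (∀ a : A, ∀ x ∈ I, br a x ∈ I ∧ br x a ∈ I) →
      (∃ m : ℕ, derSeriesIn br I m = ⊥) → I ≤ leibIdeal br) :
    ∀ b : A, (∀ a : A, LinearMap.trace K A (br b ∘ₗ br a) = 0) ↔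
      b ∈ leibIdeal br :=
  semisimple_leibniz_killing_form_nondegenerate_general br leibniz hss
end

section
/- Let A be a non-Lie (left) Leibniz algebra over an algebraically closed field of characteristic zero with dim(A) ≤ 4. Then A is solvable. -/
/-!
Let `I = Leib(A)`: it is an ideal with `[I, A] = 0`, and `Q = A / I` is a Lie algebra which is
not solvable if `A` is not. A non-solvable Lie algebra of dimension at most `3` is perfect and
`3`-dimensional, so `I = K e` is a line. Writing `[a, e] = λ(a) e`, the Leibniz identity makes `λ`
vanish on `[A, A] + I = A`, so `I` is central. Then for every functional `φ` the form
`c(x̄, ȳ) = φ[x, y]` is a Leibniz `2`-cocycle on `Q`. For the symmetric part `s` of `c`,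
`s([x, y], z)` is an alternating `3`-form, equal to the Chevalley–Eilenberg coboundary of the
antisymmetric part of `c`; on a `3`-dimensional Lie algebra whose `ad x` are traceless (as they
are when `Q` is perfect) all such coboundaries vanish. Hence `s` vanishes on `[Q, Q] = Q`, so
`φ [a, a] = 0` for all `φ` and `a`, contradicting that `A` is not a Lie algebra.
-/

section

open Module

variable {K A : Type*} [Field K] [AddCommGroup A] [Module K A]

def IsLeibniz (br : A →ₗ[K] A →ₗ[K] A) : Prop :=
  ∀ a b c, br a (br b c) = br (br a b) c + br b (br a c)

def IsLeibnizCocycle (br : A →ₗ[K] A →ₗ[K] A) (c : A →ₗ[K] A →ₗ[K] K) : Prop :=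
  ∀ x y z, c x (br y z) = c (br x y) z + c y (br x z)

def leibnizKernel (br : A →ₗ[K] A →ₗ[K] A) : Submodule K A :=
  Submodule.span K (Set.range fun a => br a a)

theorem add_swap_mem_leibnizKernel (br : A →ₗ[K] A →ₗ[K] A) (x y : A) :
    br x y + br y x ∈ leibnizKernel br := by
  have h : br x y + br y x = br (x + y) (x + y) - br x x - br y y := by
    simp only [map_add, LinearMap.add_apply]
    abel
  rw [h]
  exact sub_mem (sub_mem (Submodule.subset_span ⟨_, rfl⟩) (Submodule.subset_span ⟨_, rfl⟩))
    (Submodule.subset_span ⟨_, rfl⟩)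

section DerivedSeries

variable {br : A →ₗ[K] A →ₗ[K] A}

theorem bracketSpan_le {p q r : Submodule K A} (h : ∀ a ∈ p, ∀ b ∈ q, br a b ∈ r) :
    bracketSpan br p q ≤ r := by
  rw [bracketSpan, Submodule.span_le]
  rintro _ ⟨a, ha, b, hb, rfl⟩
  exact h a ha b hb

theorem map_bracketSpan {B : Type*} [AddCommGroup B] [Module K B] {br' : B →ₗ[K] B →ₗ[K] B}
    (f : A →ₗ[K] B) (hf : ∀ a b, f (br a b) = br' (f a) (f b)) (p q : Submodule K A) :
    (bracketSpan br p q).map f = bracketSpan br' (p.map f) (q.map f) := by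
  rw [bracketSpan, bracketSpan, Submodule.map_span]
  congr 1
  ext
  simp [hf]

theorem map_derSeries {B : Type*} [AddCommGroup B] [Module K B] {br' : B →ₗ[K] B →ₗ[K] B}
    (f : A →ₗ[K] B) (hsurj : Function.Surjective f) (hf : ∀ a b, f (br a b) = br' (f a) (f b))
    (n : ℕ) : (derSeries br n).map f = derSeries br' n := by
  induction n with
  | zero => exact Submodule.map_top f ▸ LinearMap.range_eq_top.2 hsurj
  | succ n ih => rw [derSeries, derSeries, map_bracketSpan f hf, ih]

theorem derSeries_succ_eq_bot_of_le_ker {n : ℕ} (h : derSeries br n ≤ LinearMap.ker br) :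
    derSeries br (n + 1) = ⊥ :=
  le_bot_iff.1 <| bracketSpan_le fun a ha b _ => by simp [LinearMap.mem_ker.1 (h ha)]

end DerivedSeries

theorem Submodule.exists_le_span_pair {V : Type*} [AddCommGroup V] [Module K V]
    (p : Submodule K V) [FiniteDimensional K p] (hp : finrank K p ≤ 2) :
    ∃ x y : V, p ≤ Submodule.span K {x, y} := by
  rcases hp.lt_or_eq with hp | hp
  · obtain ⟨x, rfl⟩ := (p.finrank_le_one_iff_isPrincipal.1 (by omega)).principal
    exact ⟨x, x, Submodule.span_mono (by simp)⟩
  · let b := finBasisOfFinrankEq K p hp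
    refine ⟨b 0, b 1, fun v hv => Submodule.mem_span_pair.2 ?_⟩
    have hv := congrArg Subtype.val (b.sum_repr ⟨v, hv⟩)
    rw [Fin.sum_univ_two] at hv
    exact ⟨_, _, hv⟩

theorem LinearMap.eq_zero_of_alternating_of_basis_fin_three {R M N : Type*} [CommRing R]
    [AddCommGroup M] [Module R M] [AddCommGroup N] [Module R N]
    (T : M →ₗ[R] M →ₗ[R] M →ₗ[R] N) (h₁₂ : ∀ x z, T x x z = 0) (h₂₃ : ∀ x y, T x y y = 0)
    (e : Basis (Fin 3) R M) (he : T (e 0) (e 1) (e 2) = 0) : T = 0 := by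
  have swap₁₂ (x y z : M) : T y x z = -T x y z := by
    have h := h₁₂ (x + y) z
    simp only [map_add, LinearMap.add_apply, h₁₂, zero_add, add_zero] at h
    exact eq_neg_of_add_eq_zero_left h
  have swap₂₃ (x y z : M) : T x z y = -T x y z := by
    have h := h₂₃ x (y + z)
    simp only [map_add, LinearMap.add_apply, h₂₃, zero_add, add_zero] at h
    exact eq_neg_of_add_eq_zero_left h
  have h₁₃ (x y : M) : T x y x = 0 := by rw [swap₂₃, h₁₂, neg_zero]
  refine e.ext fun i => e.ext fun j => e.ext fun k => ?_
  -- each specialised swap sorts one pair of indices, so `simp` ends at `T (e 0) (e 1) (e 2)`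
  fin_cases i <;> fin_cases j <;> fin_cases k <;>
    simp [h₁₂, h₂₃, h₁₃, he, swap₁₂ (e 0) (e 1), swap₁₂ (e 0) (e 2), swap₁₂ (e 1) (e 2),
      swap₂₃ _ (e 0) (e 2), swap₂₃ _ (e 1) (e 2)]

namespace LinearMap.IsAlt

variable {br : A →ₗ[K] A →ₗ[K] A} (halt : br.IsAlt)
include halt

theorem bracketSpan_le_span_singleton {p : Submodule K A} {x y : A}
    (h : p ≤ Submodule.span K {x, y}) : bracketSpan br p p ≤ K ∙ br x y := by
  refine bracketSpan_le fun a ha b hb => ?_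
  obtain ⟨s, t, rfl⟩ := Submodule.mem_span_pair.1 (h ha)
  obtain ⟨s', t', rfl⟩ := Submodule.mem_span_pair.1 (h hb)
  have hyx : br y x = -br x y := (halt.neg x y).symm
  refine Submodule.mem_span_singleton.2 ⟨s * t' - t * s', ?_⟩
  simp only [map_add, map_smul, LinearMap.add_apply, LinearMap.smul_apply, halt.self_eq_zero,
    hyx]
  module

theorem bracketSpan_eq_bot {p : Submodule K A} {x : A} (h : p ≤ K ∙ x) :
    bracketSpan br p p = ⊥ := by
  refine le_bot_iff.1 (bracketSpan_le fun a ha b hb => ?_)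
  obtain ⟨s, rfl⟩ := Submodule.mem_span_singleton.1 (h ha)
  obtain ⟨t, rfl⟩ := Submodule.mem_span_singleton.1 (h hb)
  simp [halt.self_eq_zero]

theorem derSeries_add_two_eq_bot [FiniteDimensional K A] {n : ℕ}
    (h : finrank K (derSeries br n) ≤ 2) : derSeries br (n + 2) = ⊥ := by
  obtain ⟨x, y, hxy⟩ := (derSeries br n).exists_le_span_pair h
  exact halt.bracketSpan_eq_bot (halt.bracketSpan_le_span_singleton hxy)

theorem three_le_finrank_derSeries_one [FiniteDimensional K A]
    (hns : ∀ m, derSeries br m ≠ ⊥) : 3 ≤ finrank K (derSeries br 1) := by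
  by_contra! h
  exact hns 3 (halt.derSeries_add_two_eq_bot (by omega))

/-- In the sum, `β (e i) (e j)` has coefficient `± trace (br (e k))`, `{i, j, k} = {0, 1, 2}`. -/
theorem cyclic_sum_eq_zero_of_trace_eq_zero (htr : ∀ x, LinearMap.trace K A (br x) = 0)
    (e : Basis (Fin 3) K A) {β : A →ₗ[K] A →ₗ[K] K} (hβ : β.IsAlt) :
    β (br (e 0) (e 1)) (e 2) + β (br (e 1) (e 2)) (e 0) + β (br (e 2) (e 0)) (e 1) = 0 := by
  have hanti (i j : Fin 3) : br (e j) (e i) = -br (e i) (e j) := (halt.neg _ _).symm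
  have htr' (i : Fin 3) : ∑ k, e.repr (br (e i) (e k)) k = 0 := by
    simpa [LinearMap.trace_eq_matrix_trace K e, Matrix.trace, LinearMap.toMatrix_apply]
      using htr (e i)
  have t₀ := htr' 0
  have t₁ := htr' 1
  have t₂ := htr' 2
  simp only [Fin.sum_univ_three, halt.self_eq_zero, hanti 0 1, hanti 0 2, hanti 1 2, map_zero,
    map_neg, Finsupp.coe_neg, Finsupp.coe_zero, Pi.neg_apply, Pi.zero_apply] at t₀ t₁ t₂
  rw [← e.sum_repr (br (e 0) (e 1)), ← e.sum_repr (br (e 1) (e 2)), hanti 0 2,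
    ← e.sum_repr (br (e 0) (e 2))]
  simp only [Fin.sum_univ_three, map_add, map_smul, map_neg, LinearMap.add_apply,
    LinearMap.smul_apply, LinearMap.neg_apply, smul_eq_mul, hβ.self_eq_zero,
    ← hβ.neg (e 0) (e 1), ← hβ.neg (e 0) (e 2), ← hβ.neg (e 1) (e 2)]
  linear_combination β (e 1) (e 2) * t₀ - β (e 0) (e 2) * t₁ + β (e 0) (e 1) * t₂

end LinearMap.IsAlt

namespace IsLeibniz

variable {br : A →ₗ[K] A →ₗ[K] A} (hbr : IsLeibniz br)
include hbr

theorem apply_apply_self (a : A) : br (br a a) = 0 := by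
  ext b
  simpa using (hbr a a b).symm

theorem leibnizKernel_le_ker : leibnizKernel br ≤ LinearMap.ker br := by
  rw [leibnizKernel, Submodule.span_le]
  rintro _ ⟨a, rfl⟩
  exact hbr.apply_apply_self a

theorem apply_mem_leibnizKernel (a : A) {z : A} (hz : z ∈ leibnizKernel br) :
    br a z ∈ leibnizKernel br := by
  induction hz using Submodule.span_induction with
  | mem _ h =>
    obtain ⟨b, rfl⟩ := h
    rw [hbr a b b]
    exact add_swap_mem_leibnizKernel br _ _
  | zero => simp
  | add x y _ _ hx hy => simpa using add_mem hx hy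
  | smul t x _ hx => simpa using Submodule.smul_mem _ t hx

theorem trace_apply_bracket [FiniteDimensional K A] (a b : A) :
    LinearMap.trace K A (br (br a b)) = 0 := by
  have hcomm : br (br a b) = br a * br b - br b * br a := by
    ext c
    simp [hbr a b c]
  rw [hcomm, map_sub, LinearMap.trace_mul_comm, sub_self]

theorem trace_apply_eq_zero [FiniteDimensional K A] (hperf : derSeries br 1 = ⊤) (x : A) :
    LinearMap.trace K A (br x) = 0 := by
  have hle : derSeries br 1 ≤ LinearMap.ker (LinearMap.trace K A ∘ₗ br) :=
    bracketSpan_le fun a _ b _ => hbr.trace_apply_bracket a b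
  exact hle (hperf ▸ Submodule.mem_top)

theorem apply_bracket_eq_zero {a b e : A} (ha : br a e ∈ K ∙ e) (hb : br b e ∈ K ∙ e) :
    br (br a b) e = 0 := by
  obtain ⟨s, hs⟩ := Submodule.mem_span_singleton.1 ha
  obtain ⟨t, ht⟩ := Submodule.mem_span_singleton.1 hb
  have h := hbr a b e
  simp only [← hs, ← ht, map_smul] at h
  rw [smul_comm] at h
  exact add_eq_right.1 h.symm

theorem isLeibnizCocycle_compr₂ (φ : Dual K A) : IsLeibnizCocycle br (br.compr₂ φ) := by
  intro x y z
  simp [hbr x y z]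

def quotientBracket :
    A ⧸ leibnizKernel br →ₗ[K] A ⧸ leibnizKernel br →ₗ[K] A ⧸ leibnizKernel br :=
  (br.compr₂ (leibnizKernel br).mkQ).liftQ₂ _ _
    (fun z hz => by
      ext b
      simp [LinearMap.mem_ker.1 (hbr.leibnizKernel_le_ker hz)])
    (fun z hz => by
      ext a
      simpa using hbr.apply_mem_leibnizKernel a hz)

@[simp]
theorem quotientBracket_mk (a b : A) :
    hbr.quotientBracket (Submodule.Quotient.mk a) (Submodule.Quotient.mk b) =
      Submodule.Quotient.mk (br a b) :=
  rfl

theorem isAlt_quotientBracket : hbr.quotientBracket.IsAlt := by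
  intro x
  induction x using Submodule.Quotient.induction_on with
  | _ a => exact (Submodule.Quotient.mk_eq_zero _).2 (Submodule.subset_span ⟨a, rfl⟩)

theorem isLeibniz_quotientBracket : IsLeibniz hbr.quotientBracket := by
  intro x y z
  induction x using Submodule.Quotient.induction_on with | _ a =>
  induction y using Submodule.Quotient.induction_on with | _ b =>
  induction z using Submodule.Quotient.induction_on with | _ c =>
  simp only [quotientBracket_mk, ← Submodule.Quotient.mk_add, hbr a b c]

theorem map_mkQ_derSeries (n : ℕ) :
    (derSeries br n).map (leibnizKernel br).mkQ = derSeries hbr.quotientBracket n :=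
  map_derSeries _ (Submodule.mkQ_surjective _) (fun _ _ => rfl) n

theorem derSeries_succ_eq_bot {m : ℕ} (h : derSeries hbr.quotientBracket m = ⊥) :
    derSeries br (m + 1) = ⊥ := by
  refine derSeries_succ_eq_bot_of_le_ker (le_trans ?_ hbr.leibnizKernel_le_ker)
  rw [← Submodule.ker_mkQ (leibnizKernel br), LinearMap.le_ker_iff_map,
    hbr.map_mkQ_derSeries, h]

theorem leibnizKernel_le_ker_flip {e : A} (he : leibnizKernel br = K ∙ e)
    (hperf : derSeries hbr.quotientBracket 1 = ⊤) :
    leibnizKernel br ≤ LinearMap.ker br.flip := by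
  have htop : derSeries br 1 ⊔ leibnizKernel br = ⊤ := by
    rw [sup_comm, ← Submodule.comap_map_mkQ, hbr.map_mkQ_derSeries, hperf, Submodule.comap_top]
  have hideal (a : A) : br a e ∈ K ∙ e :=
    he ▸ hbr.apply_mem_leibnizKernel a (he ▸ Submodule.mem_span_singleton_self e)
  have hle : derSeries br 1 ⊔ leibnizKernel br ≤ LinearMap.ker (br.flip e) := by
    refine sup_le (bracketSpan_le fun a _ b _ => hbr.apply_bracket_eq_zero (hideal a) (hideal b))
      fun z hz => ?_
    simp [LinearMap.mem_ker.1 (hbr.leibnizKernel_le_ker hz)]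
  intro z hz
  obtain ⟨t, rfl⟩ := Submodule.mem_span_singleton.1 (he ▸ hz)
  ext a
  simp [LinearMap.mem_ker.1 (hle (htop ▸ Submodule.mem_top : a ∈ _))]

theorem exists_isLeibnizCocycle_quotientBracket
    (hcentral : leibnizKernel br ≤ LinearMap.ker br.flip) (φ : Dual K A) :
    ∃ c : A ⧸ leibnizKernel br →ₗ[K] A ⧸ leibnizKernel br →ₗ[K] K,
      IsLeibnizCocycle hbr.quotientBracket c ∧
        ∀ a b, c (Submodule.Quotient.mk a) (Submodule.Quotient.mk b) = φ (br a b) := by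
  refine ⟨(br.compr₂ φ).liftQ₂ _ _ (fun z hz => ?_) (fun z hz => ?_), fun x y z => ?_,
    fun _ _ => rfl⟩
  · ext b
    simp [LinearMap.mem_ker.1 (hbr.leibnizKernel_le_ker hz)]
  · ext a
    simpa using congrArg φ (LinearMap.congr_fun (LinearMap.mem_ker.1 (hcentral hz)) a)
  · induction x using Submodule.Quotient.induction_on with | _ a =>
    induction y using Submodule.Quotient.induction_on with | _ b =>
    induction z using Submodule.Quotient.induction_on with | _ c =>
    exact hbr.isLeibnizCocycle_compr₂ φ a b c

end IsLeibniz

namespace IsLeibnizCocycle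

variable {br : A →ₗ[K] A →ₗ[K] A} {c : A →ₗ[K] A →ₗ[K] K} (hc : IsLeibnizCocycle br c)
  (halt : br.IsAlt)
include hc halt

theorem symm_apply_bracket_self (x y : A) : (c + c.flip) (br x y) y = 0 := by
  have h := hc x y y
  rw [halt.self_eq_zero, map_zero] at h
  simpa using h.symm

theorem symm_apply_bracket_eq_cyclic_sum (x y z : A) :
    (c + c.flip) (br x y) z =
      (c - c.flip) (br x y) z + (c - c.flip) (br y z) x + (c - c.flip) (br z x) y := by
  have h₁ := hc z x y
  have h₂ := hc y z x
  rw [← halt.neg y z] at h₁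
  rw [← halt.neg x y] at h₂
  simp only [map_neg, LinearMap.add_apply, LinearMap.sub_apply, LinearMap.flip_apply] at h₁ h₂ ⊢
  linear_combination h₁ + h₂

theorem apply_self_eq_zero [NeZero (2 : K)] [FiniteDimensional K A] (hbr : IsLeibniz br)
    (hperf : derSeries br 1 = ⊤) (hdim : finrank K A = 3) (x : A) : c x x = 0 := by
  let e := finBasisOfFinrankEq K A hdim
  have hβ : (c - c.flip).IsAlt := fun x => by simp
  have hT : br.compr₂ (c + c.flip) = 0 := by
    refine LinearMap.eq_zero_of_alternating_of_basis_fin_three _ (fun x z => by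
      simp [halt.self_eq_zero]) (hc.symm_apply_bracket_self halt) e ?_
    rw [LinearMap.compr₂_apply, hc.symm_apply_bracket_eq_cyclic_sum halt]
    exact halt.cyclic_sum_eq_zero_of_trace_eq_zero (hbr.trace_apply_eq_zero hperf) e hβ
  have hle : derSeries br 1 ≤ LinearMap.ker ((c + c.flip).flip x) :=
    bracketSpan_le fun a _ b _ => by
      simpa using LinearMap.congr_fun (LinearMap.congr_fun₂ hT a b) x
  have hs : (c + c.flip) x x = 0 := hle (hperf ▸ Submodule.mem_top)
  have h2 : (2 : K) * c x x = 0 := by simpa [two_mul] using hs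
  exact (mul_eq_zero.1 h2).resolve_left two_ne_zero

end IsLeibnizCocycle

end

theorem nonlie_leibniz_dim_le_four_solvable_general
    {K A : Type*} [Field K] [CharZero K]
    [AddCommGroup A] [Module K A] [FiniteDimensional K A]
    (br : A →ₗ[K] A →ₗ[K] A)
    (leibniz : ∀ a b c : A, br a (br b c) = br (br a b) c + br b (br a c))
    (hnonlie : ∃ a : A, br a a ≠ 0)
    (hdim : Module.finrank K A ≤ 4) :
    ∃ m : ℕ, derSeries br m = ⊥ := by
  by_contra! hns
  have hbr : IsLeibniz br := leibniz
  obtain ⟨a, ha⟩ := hnonlie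
  have hI : 1 ≤ Module.finrank K (leibnizKernel br) := Submodule.one_le_finrank_iff.2 <|
    (Submodule.ne_bot_iff _).2 ⟨br a a, Submodule.subset_span ⟨a, rfl⟩, ha⟩
  have hQ : 3 ≤ Module.finrank K (derSeries hbr.quotientBracket 1) :=
    hbr.isAlt_quotientBracket.three_le_finrank_derSeries_one fun m h =>
      hns (m + 1) (hbr.derSeries_succ_eq_bot h)
  have hsum := (leibnizKernel br).finrank_quotient_add_finrank
  have hle := Submodule.finrank_le (derSeries hbr.quotientBracket 1)
  have hperf : derSeries hbr.quotientBracket 1 = ⊤ := Submodule.eq_top_of_finrank_eq (by omega)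
  obtain ⟨e, he⟩ := ((leibnizKernel br).finrank_le_one_iff_isPrincipal.1 (by omega)).principal
  refine ha ((Module.forall_dual_apply_eq_zero_iff K _).1 fun φ => ?_)
  obtain ⟨c, hc, hcφ⟩ :=
    hbr.exists_isLeibnizCocycle_quotientBracket (hbr.leibnizKernel_le_ker_flip he hperf) φ
  rw [← hcφ]
  exact hc.apply_self_eq_zero hbr.isAlt_quotientBracket hbr.isLeibniz_quotientBracket hperf
    (by omega) _

/-- a non-Lie (left) Leibniz algebra of dimension at most `4` over an
algebraically closed field of characteristic zero is solvable. -/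
theorem nonlie_leibniz_dim_le_four_solvable
    {K A : Type*} [Field K] [IsAlgClosed K] [CharZero K]
    [AddCommGroup A] [Module K A] [FiniteDimensional K A]
    (br : A →ₗ[K] A →ₗ[K] A)
    (leibniz : ∀ a b c : A, br a (br b c) = br (br a b) c + br b (br a c))
    (hnonlie : ∃ a : A, br a a ≠ 0)
    (hdim : Module.finrank K A ≤ 4) :
    ∃ m : ℕ, derSeries br m = ⊥ :=
  nonlie_leibniz_dim_le_four_solvable_general br leibniz hnonlie hdim
end
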